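/- arXiv:math/0403015 — 5 statements merged into one kernel-verified Lean document; each statement's English description precedes it below -/
import Mathlib

section
/- Let f be a nonzero polynomial in n complex variables. Then the amoeba 𝒜(f) = Log(V_f) is a closed subset of ℝⁿ and its complement ℝⁿ ∖ 𝒜(f) is nonempty. -/
/-!
In polar coordinates `z = exp x • θ` the torus `(ℂ*)ⁿ` is `ℝⁿ × (S¹)ⁿ` and `Log` is the projection
to the first factor. As `(S¹)ⁿ` is compact this projection is a closed map, so the amoeba is closed.

For the complement choose `v` such that `a ↦ a ⬝ᵥ v` separates the exponents of `f`. Over the point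
`t • v` every monomial `c_a zᵃ` has modulus `‖c_a‖ exp (t (a ⬝ᵥ v))`, so for `t ≫ 0` the monomial of
largest weight outweighs all the others together and `f` has no zero over `t • v`.
-/

/-- The logarithmic moment map `Log : (ℂ*)ⁿ → ℝⁿ`. -/
noncomputable def LogMap {n : ℕ} (z : Fin n → ℂ) : Fin n → ℝ :=
  fun i => Real.log ‖z i‖

/-- The amoeba of a polynomial `f`: the image under `Log` of the zero set of `f`
in the complex torus `(ℂ*)ⁿ`. -/
noncomputable def amoeba {n : ℕ} (f : MvPolynomial (Fin n) ℂ) : Set (Fin n → ℝ) :=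
  LogMap '' {z : Fin n → ℂ | (∀ i, z i ≠ 0) ∧ MvPolynomial.eval z f = 0}

open Matrix Filter Topology

noncomputable def expMulCircle {n : ℕ} (p : (Fin n → ℝ) × (Fin n → Circle)) : Fin n → ℂ :=
  fun i => Real.exp (p.1 i) * p.2 i

theorem continuous_expMulCircle {n : ℕ} : Continuous (expMulCircle (n := n)) := by
  unfold expMulCircle
  fun_prop

theorem expMulCircle_ne_zero {n : ℕ} (p : (Fin n → ℝ) × (Fin n → Circle)) (i : Fin n) :
    expMulCircle p i ≠ 0 :=
  mul_ne_zero (Complex.ofReal_ne_zero.mpr (Real.exp_ne_zero _)) (Circle.coe_ne_zero _)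

theorem logMap_expMulCircle {n : ℕ} (p : (Fin n → ℝ) × (Fin n → Circle)) :
    LogMap (expMulCircle p) = p.1 := by
  funext i
  simp [LogMap, expMulCircle, Circle.norm_coe]

theorem expMulCircle_logMap_arg {n : ℕ} {z : Fin n → ℂ} (hz : ∀ i, z i ≠ 0) :
    expMulCircle (LogMap z, fun i => Circle.exp (z i).arg) = z := by
  funext i
  simp [expMulCircle, LogMap, Real.exp_log (norm_pos_iff.mpr (hz i)),
    Complex.norm_mul_exp_arg_mul_I]

theorem image_logMap_eq_image_fst_preimage_expMulCircle {n : ℕ} (Z : Set (Fin n → ℂ)) :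
    LogMap '' {z | (∀ i, z i ≠ 0) ∧ z ∈ Z} = Prod.fst '' (expMulCircle ⁻¹' Z) := by
  ext x
  constructor
  · rintro ⟨z, ⟨hz, hzZ⟩, rfl⟩
    exact ⟨_, by rwa [Set.mem_preimage, expMulCircle_logMap_arg hz], rfl⟩
  · rintro ⟨p, hp, rfl⟩
    exact ⟨expMulCircle p, ⟨expMulCircle_ne_zero p, hp⟩, logMap_expMulCircle p⟩

theorem IsClosed.image_logMap {n : ℕ} {Z : Set (Fin n → ℂ)} (hZ : IsClosed Z) :
    IsClosed (LogMap '' {z | (∀ i, z i ≠ 0) ∧ z ∈ Z}) := by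
  rw [image_logMap_eq_image_fst_preimage_expMulCircle]
  exact isClosedMap_fst_of_compactSpace _ (hZ.preimage continuous_expMulCircle)

theorem amoeba_isClosed {n : ℕ} (f : MvPolynomial (Fin n) ℂ) : IsClosed (amoeba f) :=
  (isClosed_eq (MvPolynomial.continuous_eval f) continuous_const).image_logMap

theorem exists_dotProduct_injOn {k ι : Type*} [Field k] [LinearOrder k] [IsStrictOrderedRing k]
    [Fintype ι] {S : Set (ι → k)} (hS : S.Finite) : ∃ v : ι → k, S.InjOn (· ⬝ᵥ v) := by
  have : Finite S := hS
  by_contra! h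
  obtain ⟨⟨⟨⟨a, _⟩, ⟨b, _⟩⟩, hab⟩, htop⟩ := Subspace.exists_eq_top_of_iUnion_eq_univ
    (p := fun ab : {p : S × S // p.1 ≠ p.2} =>
      LinearMap.ker (dotProductBilin k k ((ab.1.1 : ι → k) - (ab.1.2 : ι → k)))) <| by
    refine Set.eq_univ_of_forall fun v => ?_
    obtain ⟨a, ha, b, hb, hv, hab⟩ : ∃ a ∈ S, ∃ b ∈ S, a ⬝ᵥ v = b ⬝ᵥ v ∧ a ≠ b := by
      simpa [Set.InjOn] using h v
    refine Set.mem_iUnion.mpr ⟨⟨⟨⟨a, ha⟩, ⟨b, hb⟩⟩, by simpa using hab⟩, ?_⟩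
    simp [hv]
  have hself : (a - b) ⬝ᵥ (a - b) = 0 :=
    (htop ▸ Submodule.mem_top : a - b ∈ LinearMap.ker (dotProductBilin k k (a - b)))
  exact hab (Subtype.ext (sub_eq_zero.mp (dotProduct_self_eq_zero.mp hself)))

theorem sum_ne_zero_of_sum_erase_norm_lt {ι E : Type*} [DecidableEq ι]
    [SeminormedAddCommGroup E]
    {s : Finset ι} {w : ι → E} {i : ι} (hi : i ∈ s)
    (h : ∑ j ∈ s.erase i, ‖w j‖ < ‖w i‖) : ∑ j ∈ s, w j ≠ 0 := by
  intro hsum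
  have hwi : w i = -∑ j ∈ s.erase i, w j :=
    eq_neg_of_add_eq_zero_left ((Finset.add_sum_erase s w hi).trans hsum)
  have := (norm_sum_le (s.erase i) w).trans_lt h
  rw [hwi, norm_neg] at this
  exact lt_irrefl _ this

theorem eventually_sum_ne_zero_of_norm_eq_mul_exp {ι E : Type*} [SeminormedAddCommGroup E]
    {s : Finset ι} (hs : s.Nonempty) {c : ι → ℝ} (hc : ∀ i ∈ s, 0 < c i) {μ : ι → ℝ}
    (hμ : Set.InjOn μ s) :
    ∀ᶠ t in atTop, ∀ w : ι → E, (∀ i ∈ s, ‖w i‖ = c i * Real.exp (t * μ i)) →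
      ∑ i ∈ s, w i ≠ 0 := by
  classical
  obtain ⟨m, hm, hmax⟩ := s.exists_max_image μ hs
  have hlt : ∀ i ∈ s.erase m, μ i - μ m < 0 := fun i hi =>
    sub_neg.mpr <| (hmax i (Finset.mem_of_mem_erase hi)).lt_of_ne
      fun h => Finset.ne_of_mem_erase hi (hμ (Finset.mem_of_mem_erase hi) hm h)
  have hdecay : Tendsto (fun t => ∑ i ∈ s.erase m, c i * Real.exp (t * (μ i - μ m)))
      atTop (𝓝 0) := by
    rw [← Finset.sum_const_zero (s := s.erase m)]
    refine tendsto_finsetSum _ fun i hi => ?_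
    simpa using (Real.tendsto_exp_atBot.comp
      (tendsto_id.atTop_mul_const_of_neg (hlt i hi))).const_mul (c i)
  filter_upwards [hdecay.eventually (gt_mem_nhds (hc m hm))] with t ht w hw
  refine sum_ne_zero_of_sum_erase_norm_lt hm ?_
  calc ∑ i ∈ s.erase m, ‖w i‖
      = (∑ i ∈ s.erase m, c i * Real.exp (t * (μ i - μ m))) * Real.exp (t * μ m) := by
        rw [Finset.sum_mul]
        refine Finset.sum_congr rfl fun i hi => ?_
        rw [hw i (Finset.mem_of_mem_erase hi), mul_assoc, ← Real.exp_add]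
        ring_nf
    _ < c m * Real.exp (t * μ m) := by gcongr
    _ = ‖w m‖ := (hw m hm).symm

theorem norm_prod_pow_eq_exp_dotProduct_logMap {n : ℕ} {z : Fin n → ℂ} (hz : ∀ i, z i ≠ 0)
    (a : Fin n → ℕ) : ‖∏ i, z i ^ a i‖ = Real.exp ((fun i => (a i : ℝ)) ⬝ᵥ LogMap z) := by
  rw [norm_prod, dotProduct, Real.exp_sum]
  refine Finset.prod_congr rfl fun i _ => ?_
  rw [norm_pow, LogMap, Real.exp_nat_mul, Real.exp_log (norm_pos_iff.mpr (hz i))]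

theorem amoeba_compl_nonempty {n : ℕ} {f : MvPolynomial (Fin n) ℂ} (hf : f ≠ 0) :
    (amoeba f)ᶜ.Nonempty := by
  set exponent : (Fin n →₀ ℕ) → (Fin n → ℝ) := fun a i => a i
  have hexponent : exponent.Injective := fun a b h =>
    Finsupp.ext fun i => Nat.cast_injective (congrFun h i)
  obtain ⟨v, hv⟩ := exists_dotProduct_injOn ((f.support.finite_toSet).image exponent)
  obtain ⟨t, ht⟩ := (eventually_sum_ne_zero_of_norm_eq_mul_exp (E := ℂ)
    (MvPolynomial.support_nonempty.mpr hf)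
    (fun a ha => norm_pos_iff.mpr (MvPolynomial.mem_support_iff.mp ha))
    (hv.comp hexponent.injOn (Set.mapsTo_image _ _))).exists
  refine ⟨t • v, ?_⟩
  rintro ⟨z, ⟨hz, hfz⟩, hlog⟩
  refine ht (fun a => f.coeff a * ∏ i, z i ^ a i) (fun a _ => ?_)
    ((MvPolynomial.eval_eq' z f).symm.trans hfz)
  rw [norm_mul, norm_prod_pow_eq_exp_dotProduct_logMap hz, hlog, dotProduct_smul, smul_eq_mul]
  rfl

/-- The amoeba of a nonzero polynomial is closed and has nonempty complement. -/
theorem amoeba_isClosed_and_compl_nonempty {n : ℕ} (f : MvPolynomial (Fin n) ℂ)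
    (hf : f ≠ 0) :
    IsClosed (amoeba f) ∧ (amoeba f)ᶜ.Nonempty :=
  ⟨amoeba_isClosed f, amoeba_compl_nonempty hf⟩
end

section
/- (Forsberg–Passare–Tsikh) Let f be a nonzero polynomial in n complex variables with amoeba 𝒜(f) ⊆ ℝⁿ. Then every connected component of the complement ℝⁿ ∖ 𝒜(f) is a convex subset of ℝⁿ. -/
/-!
Fix an integer direction `d`. Restricting `f` to the curves `ζ ↦ z * ζ ^ d` gives one-variable
polynomials whose roots of modulus `exp t` correspond to points of the amoeba on the line
`Log z + t • d`. For `(Log z, arg z)` ranging over `E × Tⁿ`, with `E` a component of the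
complement, the number of roots in the unit disc is given by the argument principle, hence is a
continuous integer-valued function on a connected set, hence constant. If `a` and `a + s • d` both
lie in `E`, comparing the counts at these two base points shows that no root has modulus in
`[1, exp s]`, so the segment from `a` to `a + s • d` avoids the amoeba. As `E` is open, any segment
in `E` can be perturbed into one with a rational direction that passes through a given point.
-/

open Complex Polynomial Metric Set Real
open scoped Classical

theorem circleIntegral_sub_inv_of_notMem_closedBall {c w : ℂ} {R : ℝ} (hR : 0 ≤ R)
    (hw : w ∉ closedBall c R) : (∮ z in C(c, R), (z - w)⁻¹) = 0 := by
  refine DiffContOnCl.circleIntegral_eq_zero hR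
    (DifferentiableOn.diffContOnCl_ball (U := {w}ᶜ) (fun z hz => ?_) fun z hz h => hw (h ▸ hz))
  exact ((differentiableAt_id.sub_const w).inv (sub_ne_zero.2 hz)).differentiableWithinAt

theorem circleIntegral_multisetSum_sub_inv {c : ℂ} {R : ℝ} (hR : 0 < R) (s : Multiset ℂ)
    (hs : ∀ w ∈ s, w ∉ sphere c R) :
    (∮ z in C(c, R), (s.map fun w => (z - w)⁻¹).sum) =
      2 * π * I * (s.filter (· ∈ ball c R)).card := by
  induction s using Multiset.induction_on with
  | empty => simp [circleIntegral]
  | cons w s ih =>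
    have hs' : ∀ w' ∈ s, w' ∉ sphere c R := fun w' hw' => hs w' (Multiset.mem_cons_of_mem hw')
    have hint : CircleIntegrable (fun z => (z - w)⁻¹) c R :=
      circleIntegrable_sub_inv_iff.2 (Or.inr (by rw [abs_of_pos hR]; exact hs w (by simp)))
    have hint_sum : CircleIntegrable (fun z => (s.map fun w => (z - w)⁻¹).sum) c R := by
      refine (continuousOn_multiset_sum (f := fun w z : ℂ => (z - w)⁻¹) s fun w' hw' => ?_)
        |>.circleIntegrable hR.le
      exact (continuousOn_id.sub continuousOn_const).inv₀ fun z hz h =>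
        hs' w' hw' ((sub_eq_zero.1 h : z = w') ▸ hz)
    simp only [Multiset.map_cons, Multiset.sum_cons]
    rw [circleIntegral.integral_add hint hint_sum, ih hs']
    by_cases hw : w ∈ ball c R
    · rw [circleIntegral.integral_sub_inv_of_mem_ball hw, Multiset.filter_cons_of_pos _ hw]
      simp; ring
    · have hw' : w ∉ closedBall c R := fun h =>
        hs w (by simp) ((mem_closedBall.1 h).eq_or_lt.resolve_right hw)
      rw [circleIntegral_sub_inv_of_notMem_closedBall hR.le hw', Multiset.filter_cons_of_neg _ hw]
      simp

theorem Polynomial.circleIntegral_derivative_div_eq {c : ℂ} {R : ℝ} (hR : 0 < R) {Q : ℂ[X]}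
    (hQ : ∀ z ∈ sphere c R, Q.eval z ≠ 0) :
    (∮ z in C(c, R), Q.derivative.eval z / Q.eval z) =
      2 * π * I * (Q.roots.filter (· ∈ ball c R)).card := by
  rw [← circleIntegral_multisetSum_sub_inv hR Q.roots fun w hw hws =>
    hQ w hws (isRoot_of_mem_roots hw)]
  refine circleIntegral.integral_congr hR.le fun z hz => ?_
  simp only [(IsAlgClosed.splits Q).eval_derivative_div_eval_of_ne_zero (hQ z hz), one_div]

theorem card_roots_filter_ball_eq_of_isPreconnected {X : Type*} [TopologicalSpace X]
    {Q : X → ℂ[X]}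
    (hQ : Continuous fun q : X × ℂ => (Q q.1).eval q.2)
    (hQ' : Continuous fun q : X × ℂ => (Q q.1).derivative.eval q.2)
    {c : ℂ} {R : ℝ} (hR : 0 < R) {S : Set X} (hS : IsPreconnected S)
    (hS_roots : ∀ x ∈ S, ∀ z ∈ sphere c R, (Q x).eval z ≠ 0) {x y : X} (hx : x ∈ S)
    (hy : y ∈ S) :
    ((Q x).roots.filter (· ∈ ball c R)).card = ((Q y).roots.filter (· ∈ ball c R)).card := by
  have := Subtype.preconnectedSpace hS
  let count : S → ℕ := fun x => ((Q x).roots.filter (· ∈ ball c R)).card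
  have hcount : ∀ x : S, (count x : ℝ) =
      ((∮ z in C(c, R), (Q x).derivative.eval z / (Q x).eval z) / (2 * π * I)).re := by
    intro x
    rw [Polynomial.circleIntegral_derivative_div_eq hR (hS_roots x x.2),
      mul_div_cancel_left₀ _ (by simp [pi_ne_zero])]
    simp [count]
  have hcont :
      Continuous fun x : S => ∮ z in C(c, R), (Q x).derivative.eval z / (Q x).eval z := by
    refine intervalIntegral.continuous_parametric_intervalIntegral_of_continuous' ?_ _ _
    have hmap : Continuous fun q : S × ℝ => ((q.1 : X), circleMap c R q.2) := by fun_prop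
    have hderiv : Continuous (deriv (circleMap c R)) := by
      rw [funext (deriv_circleMap c R)]
      exact (continuous_circleMap 0 R).mul continuous_const
    exact hderiv.comp continuous_snd |>.smul <| (hQ'.comp hmap).div (hQ.comp hmap) fun q =>
      hS_roots q.1 q.1.2 _ (circleMap_mem_sphere c hR.le _)
  have hcount_cont : Continuous count := Nat.isClosedEmbedding_coe_real.continuous_iff.2 <| by
    simpa only [Function.comp_def, hcount] using continuous_re.comp (hcont.div_const _)
  exact PreconnectedSpace.constant this hcount_cont (x := ⟨x, hx⟩) (y := ⟨y, hy⟩)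

theorem prod_zpow_eq_zpow_sum {G₀ ι : Type*} [CommGroupWithZero G₀] {a : G₀} (ha : a ≠ 0)
    (s : Finset ι) (n : ι → ℤ) : ∏ i ∈ s, a ^ n i = a ^ ∑ i ∈ s, n i := by
  induction s using Finset.cons_induction with
  | empty => simp
  | cons i s hi ih => rw [Finset.prod_cons, Finset.sum_cons, zpow_add₀ ha, ih]

section CurvePoly

variable {σ K : Type*} [Field K]

theorem zpow_weight_eq_zpow_mul_pow {d : σ → ℤ} {M : ℤ} {α : σ →₀ ℕ}
    (hα : M ≤ Finsupp.weight d α) {a : K} (ha : a ≠ 0) :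
    a ^ Finsupp.weight d α = a ^ M * a ^ (Finsupp.weight d α - M).toNat := by
  rw [← zpow_natCast, Int.toNat_of_nonneg (sub_nonneg.2 hα), ← zpow_add₀ ha, add_sub_cancel]

variable [Fintype σ]

theorem prod_zpow_pow_eq_zpow_weight {a : K} (ha : a ≠ 0) (d : σ → ℤ) (α : σ →₀ ℕ) :
    ∏ i, (a ^ d i) ^ α i = a ^ Finsupp.weight d α := by
  rw [Finsupp.weight_apply, Finsupp.sum_fintype _ _ (by simp)]
  simp only [← zpow_natCast, ← zpow_mul, prod_zpow_eq_zpow_sum ha, nsmul_eq_mul, mul_comm]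

/-- `ζ ^ (-M) * f (z * ζ ^ d)`, a polynomial in `ζ` when `M` is at most the `d`-weight of every
monomial of `f` (otherwise `Int.toNat` truncates). -/
noncomputable def curvePoly (f : MvPolynomial σ K) (d : σ → ℤ) (M : ℤ) (z : σ → K) : K[X] :=
  ∑ α ∈ f.support, C (f.coeff α * ∏ i, z i ^ α i) * X ^ (Finsupp.weight d α - M).toNat

theorem continuous_eval_curvePoly (f : MvPolynomial σ ℂ) (d : σ → ℤ) (M : ℤ) :
    Continuous fun q : (σ → ℂ) × ℂ => (curvePoly f d M q.1).eval q.2 := by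
  simp only [curvePoly, eval_finsetSum, eval_mul, eval_C, eval_pow, eval_X]
  fun_prop

theorem continuous_eval_derivative_curvePoly (f : MvPolynomial σ ℂ) (d : σ → ℤ) (M : ℤ) :
    Continuous fun q : (σ → ℂ) × ℂ => (curvePoly f d M q.1).derivative.eval q.2 := by
  simp only [curvePoly, derivative_sum, derivative_C_mul_X_pow, eval_finsetSum, eval_mul, eval_C,
    eval_pow, eval_X]
  fun_prop

variable {f : MvPolynomial σ K} {d : σ → ℤ} {M : ℤ}

theorem eval_curvePoly_mul_zpow (hM : ∀ α ∈ f.support, M ≤ Finsupp.weight d α) (z : σ → K)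
    {ζ : K} (hζ : ζ ≠ 0) :
    (curvePoly f d M z).eval ζ * ζ ^ M = MvPolynomial.eval (fun i => z i * ζ ^ d i) f := by
  rw [MvPolynomial.eval_eq', curvePoly, eval_finsetSum, Finset.sum_mul]
  refine Finset.sum_congr rfl fun α hα => ?_
  simp only [eval_mul, eval_C, eval_pow, eval_X, mul_pow, Finset.prod_mul_distrib,
    prod_zpow_pow_eq_zpow_weight hζ, zpow_weight_eq_zpow_mul_pow (hM α hα) hζ]
  ring

theorem curvePoly_mul_zpow (hM : ∀ α ∈ f.support, M ≤ Finsupp.weight d α) (z : σ → K)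
    {a : K} (ha : a ≠ 0) :
    curvePoly f d M (fun i => z i * a ^ d i) = C (a ^ M) * (curvePoly f d M z).comp (C a * X) := by
  simp only [curvePoly, Finset.mul_sum, sum_comp, mul_comp, C_comp, X_pow_comp]
  refine Finset.sum_congr rfl fun α hα => ?_
  simp only [mul_pow, Finset.prod_mul_distrib, prod_zpow_pow_eq_zpow_weight ha,
    zpow_weight_eq_zpow_mul_pow (hM α hα) ha, C_mul, C_pow]
  ring

end CurvePoly

section Polar

variable {n : ℕ}

noncomputable def polarPoint (p : Fin n → ℝ) (u : Fin n → Circle) : Fin n → ℂ :=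
  fun i => u i * Real.exp (p i)

theorem norm_polarPoint (p : Fin n → ℝ) (u : Fin n → Circle) (i : Fin n) :
    ‖polarPoint p u i‖ = Real.exp (p i) := by
  simp [polarPoint, Circle.norm_coe]

theorem logMap_polarPoint (p : Fin n → ℝ) (u : Fin n → Circle) :
    LogMap (polarPoint p u) = p := by
  funext i
  simp [LogMap, norm_polarPoint]

theorem polarPoint_ne_zero (p : Fin n → ℝ) (u : Fin n → Circle) (i : Fin n) :
    polarPoint p u i ≠ 0 := by
  simp [← norm_ne_zero_iff, norm_polarPoint, (Real.exp_pos _).ne']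

theorem exists_polarPoint_eq {z : Fin n → ℂ} (hz : ∀ i, z i ≠ 0) :
    ∃ u, polarPoint (LogMap z) u = z := by
  refine ⟨fun i => Circle.exp (z i).arg, funext fun i => ?_⟩
  simp only [polarPoint, LogMap, Circle.coe_exp, Real.exp_log (norm_pos_iff.2 (hz i))]
  rw [mul_comm]
  exact Complex.norm_mul_exp_arg_mul_I (z i)

theorem continuous_polarPoint :
    Continuous fun q : (Fin n → ℝ) × (Fin n → Circle) => polarPoint q.1 q.2 := by
  unfold polarPoint
  fun_prop

theorem mem_amoeba_iff_exists_eval_polarPoint {f : MvPolynomial (Fin n) ℂ} {p : Fin n → ℝ} :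
    p ∈ amoeba f ↔ ∃ u, MvPolynomial.eval (polarPoint p u) f = 0 := by
  constructor
  · rintro ⟨z, ⟨hz, hfz⟩, rfl⟩
    obtain ⟨u, hu⟩ := exists_polarPoint_eq hz
    exact ⟨u, by rwa [hu]⟩
  · rintro ⟨u, hu⟩
    exact ⟨polarPoint p u, ⟨polarPoint_ne_zero p u, hu⟩, logMap_polarPoint p u⟩

theorem isClosed_amoeba (f : MvPolynomial (Fin n) ℂ) : IsClosed (amoeba f) := by
  have : amoeba f = Prod.fst '' {q : (Fin n → ℝ) × (Fin n → Circle) |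
      MvPolynomial.eval (polarPoint q.1 q.2) f = 0} := by
    ext p
    simp [mem_amoeba_iff_exists_eval_polarPoint]
  rw [this]
  exact isClosedMap_fst_of_compactSpace _
    (isClosed_eq ((MvPolynomial.continuous_eval f).comp continuous_polarPoint) continuous_const)

theorem polarPoint_mul_zpow (p : Fin n → ℝ) (u : Fin n → Circle) (d : Fin n → ℤ) (t : ℝ)
    (v : Circle) :
    (fun i => polarPoint p u i * ((Real.exp t : ℂ) * v) ^ d i) =
      polarPoint (p + t • (Int.cast ∘ d)) (u * fun i => v ^ d i) := by
  funext i
  simp only [polarPoint, Pi.add_apply, Pi.smul_apply, Function.comp_apply, smul_eq_mul,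
    Pi.mul_apply, Circle.coe_mul, Circle.coe_zpow, mul_zpow, Complex.ofReal_exp,
    ← Complex.exp_int_mul]
  push_cast
  rw [Complex.exp_add, mul_comm (t : ℂ)]
  ring

end Polar

section CurveRoots

variable {n : ℕ} {f : MvPolynomial (Fin n) ℂ} {d : Fin n → ℤ} {M : ℤ}

theorem eval_curvePoly_polarPoint_eq_zero_iff (hM : ∀ α ∈ f.support, M ≤ Finsupp.weight d α)
    (p : Fin n → ℝ) (u : Fin n → Circle) (t : ℝ) (v : Circle) :
    (curvePoly f d M (polarPoint p u)).eval ((Real.exp t : ℂ) * v) = 0 ↔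
      MvPolynomial.eval (polarPoint (p + t • (Int.cast ∘ d)) (u * fun i => v ^ d i)) f = 0 := by
  have hζ : (Real.exp t : ℂ) * v ≠ 0 :=
    mul_ne_zero (ofReal_ne_zero.2 (Real.exp_pos t).ne') (Circle.coe_ne_zero v)
  rw [← polarPoint_mul_zpow, ← eval_curvePoly_mul_zpow hM _ hζ, mul_eq_zero,
    or_iff_left (zpow_ne_zero _ hζ)]

theorem eval_curvePoly_polarPoint_ne_zero (hM : ∀ α ∈ f.support, M ≤ Finsupp.weight d α)
    {p : Fin n → ℝ} (u : Fin n → Circle) {t : ℝ} (h : p + t • (Int.cast ∘ d) ∉ amoeba f)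
    {ζ : ℂ} (hζ : ζ ∈ sphere 0 (Real.exp t)) :
    (curvePoly f d M (polarPoint p u)).eval ζ ≠ 0 := by
  have : ζ = Real.exp t * Circle.exp ζ.arg := by
    rw [Circle.coe_exp, ← mem_sphere_zero_iff_norm.1 hζ, Complex.norm_mul_exp_arg_mul_I]
  rw [this, Ne, eval_curvePoly_polarPoint_eq_zero_iff hM]
  exact fun h0 => h (mem_amoeba_iff_exists_eval_polarPoint.2 ⟨_, h0⟩)

theorem exists_eval_curvePoly_polarPoint_exp_eq_zero
    (hM : ∀ α ∈ f.support, M ≤ Finsupp.weight d α) {p : Fin n → ℝ} {t : ℝ}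
    (h : p + t • (Int.cast ∘ d) ∈ amoeba f) :
    ∃ u, (curvePoly f d M (polarPoint p u)).eval (Real.exp t : ℂ) = 0 := by
  obtain ⟨u, hu⟩ := mem_amoeba_iff_exists_eval_polarPoint.1 h
  refine ⟨u, ?_⟩
  simpa using (eval_curvePoly_polarPoint_eq_zero_iff hM p u t 1).2
    (by simpa [← Pi.one_def] using hu)

theorem map_roots_curvePoly_polarPoint_add_smul (hM : ∀ α ∈ f.support, M ≤ Finsupp.weight d α)
    (p : Fin n → ℝ) (u : Fin n → Circle) (s : ℝ) :
    (curvePoly f d M (polarPoint (p + s • (Int.cast ∘ d)) u)).roots.map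
        ((Real.exp s : ℂ) * ·) =
      (curvePoly f d M (polarPoint p u)).roots := by
  have ha : (Real.exp s : ℂ) ≠ 0 := ofReal_ne_zero.2 (Real.exp_pos s).ne'
  have : polarPoint (p + s • (Int.cast ∘ d)) u =
      fun i => polarPoint p u i * (Real.exp s : ℂ) ^ d i := by
    simpa [Complex.ofReal_exp, ← Pi.one_def] using (polarPoint_mul_zpow p u d s 1).symm
  rw [this, curvePoly_mul_zpow hM _ ha, roots_C_mul _ (zpow_ne_zero _ ha)]
  simpa using map_roots_comp_C_mul_X_add_C (curvePoly f d M (polarPoint p u)) _ 0 ha.isUnit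

end CurveRoots

section Segment

variable {n : ℕ} {f : MvPolynomial (Fin n) ℂ}

theorem filter_roots_curvePoly_ball_one_eq (d : Fin n → ℤ) {M : ℤ}
    (hM : ∀ α ∈ f.support, M ≤ Finsupp.weight d α) {a : Fin n → ℝ} {s : ℝ} (hs : 0 < s)
    (hb : a + s • (Int.cast ∘ d) ∈ connectedComponentIn (amoeba f)ᶜ a) (u : Fin n → Circle) :
    (curvePoly f d M (polarPoint a u)).roots.filter (· ∈ ball 0 1) =
      (curvePoly f d M (polarPoint a u)).roots.filter (· ∈ ball 0 (Real.exp s)) := by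
  let Q : (Fin n → ℝ) × (Fin n → Circle) → ℂ[X] := fun q =>
    curvePoly f d M (polarPoint q.1 q.2)
  have hpolar : Continuous fun q : ((Fin n → ℝ) × (Fin n → Circle)) × ℂ =>
      (polarPoint q.1.1 q.1.2, q.2) :=
    (continuous_polarPoint.comp continuous_fst).prodMk continuous_snd
  have hE := connectedComponentIn_subset (amoeba f)ᶜ a
  have hnoroot : ∀ q ∈ connectedComponentIn (amoeba f)ᶜ a ×ˢ univ, ∀ ζ ∈ sphere (0 : ℂ) 1,
      (Q q).eval ζ ≠ 0 := by
    rintro ⟨p, u⟩ ⟨hp, -⟩ ζ hζ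
    exact eval_curvePoly_polarPoint_ne_zero hM u (t := 0) (by simpa using hE hp)
      (by simpa using hζ)
  -- The number of roots in the unit disc is constant over (component of `a`) × torus; at
  -- `a + s • d` it is the number of roots of modulus `< exp s` at `a`.
  have hcount := card_roots_filter_ball_eq_of_isPreconnected (Q := Q)
    ((continuous_eval_curvePoly f d M).comp hpolar)
    ((continuous_eval_derivative_curvePoly f d M).comp hpolar) one_pos
    (isPreconnected_connectedComponentIn.prod isPreconnected_univ) hnoroot
    (x := (a, u)) (y := (a + s • (Int.cast ∘ d), u))
    ⟨mem_connectedComponentIn (connectedComponentIn_nonempty_iff.1 ⟨_, hb⟩), trivial⟩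
    ⟨hb, trivial⟩
  have hscale : ((Q (a, u)).roots.filter (· ∈ ball 0 (Real.exp s))).card =
      ((Q (a + s • (Int.cast ∘ d), u)).roots.filter (· ∈ ball 0 1)).card := by
    rw [← map_roots_curvePoly_polarPoint_add_smul hM a u s, Multiset.filter_map,
      Multiset.card_map]
    congr 1
    refine Multiset.filter_congr fun r _ => ?_
    simp [Real.exp_pos]
  exact Multiset.eq_of_le_of_card_le
    (Multiset.monotone_filter_right _ fun r hr => ball_subset_ball (Real.one_le_exp hs.le) hr)
    (hscale.trans hcount.symm).le

theorem add_smul_notMem_amoeba (d : Fin n → ℤ) {a : Fin n → ℝ} {s : ℝ} (hs : 0 < s)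
    (hb : a + s • (Int.cast ∘ d) ∈ connectedComponentIn (amoeba f)ᶜ a) {t : ℝ}
    (ht : t ∈ Icc 0 s) : a + t • (Int.cast ∘ d) ∉ amoeba f := by
  obtain ⟨M, hM⟩ := (f.support.image (Finsupp.weight d)).bddBelow
  replace hM : ∀ α ∈ f.support, M ≤ Finsupp.weight d α := fun α hα =>
    hM (Finset.mem_coe.2 (Finset.mem_image_of_mem _ hα))
  intro hmem
  obtain ⟨u, hu⟩ := exists_eval_curvePoly_polarPoint_exp_eq_zero hM hmem
  rcases ht.2.lt_or_eq with hts | rfl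
  · have ha : a + (0 : ℝ) • (Int.cast ∘ d) ∉ amoeba f := by
      simpa using connectedComponentIn_nonempty_iff.1 ⟨_, hb⟩
    have hQ : curvePoly f d M (polarPoint a u) ≠ 0 := fun h0 =>
      eval_curvePoly_polarPoint_ne_zero hM u ha (ζ := 1) (by simp) (by simp [h0])
    have hroot : (Real.exp t : ℂ) ∈
        (curvePoly f d M (polarPoint a u)).roots.filter (· ∈ ball 0 (Real.exp s)) :=
      Multiset.mem_filter.2 ⟨mem_roots'.2 ⟨hQ, hu⟩, by simpa⟩
    rw [← filter_roots_curvePoly_ball_one_eq d hM hs hb u, Multiset.mem_filter] at hroot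
    have : Real.exp t < 1 := by simpa [(Real.exp_pos t).le] using hroot.2
    linarith [Real.one_le_exp ht.1]
  · exact eval_curvePoly_polarPoint_ne_zero hM u (connectedComponentIn_subset _ _ hb)
      (by simp) hu

end Segment

theorem exists_int_smul_sub_norm_le {ι : Type*} [Fintype ι] (v : ι → ℝ) {s : ℝ} (hs : 0 < s) :
    ∃ d : ι → ℤ, ‖s • (Int.cast ∘ d : ι → ℝ) - v‖ ≤ s / 2 := by
  refine ⟨fun i => round (v i / s), (pi_norm_le_iff_of_nonneg (by positivity)).2 fun i => ?_⟩
  calc ‖s * round (v i / s) - v i‖ = s * |v i / s - round (v i / s)| := by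
        rw [Real.norm_eq_abs, ← abs_of_pos hs, ← abs_mul, abs_of_pos hs, abs_sub_comm]
        congr 1
        field_simp
    _ ≤ s * (1 / 2) := by gcongr; exact abs_sub_round _
    _ = s / 2 := by ring

theorem convex_of_isOpen_of_intDirection_segment_subset {ι : Type*} [Fintype ι] {E : Set (ι → ℝ)}
    (hE : IsOpen E)
    (h : ∀ a ∈ E, ∀ (d : ι → ℤ) (s : ℝ), 0 < s → a + s • (Int.cast ∘ d : ι → ℝ) ∈ E →
      segment ℝ a (a + s • (Int.cast ∘ d : ι → ℝ)) ⊆ E) :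
    Convex ℝ E := by
  intro a ha b hb θ₁ θ₂ hθ₁ hθ₂ hθ
  obtain rfl : θ₁ = 1 - θ₂ := by linarith
  obtain ⟨δa, hδa, hballa⟩ := Metric.isOpen_iff.1 hE a ha
  obtain ⟨δb, hδb, hballb⟩ := Metric.isOpen_iff.1 hE b hb
  set s := min δa δb
  have hs : 0 < s := lt_min hδa hδb
  obtain ⟨d, hd⟩ := exists_int_smul_sub_norm_le (b - a) hs
  -- Moving `a` by `-θ₂ • w` and `b` by `(1 - θ₂) • w` turns the direction `b - a` into `s • d`
  -- and keeps `(1 - θ₂) • a + θ₂ • b` on the segment.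
  set w := s • (Int.cast ∘ d : ι → ℝ) - (b - a)
  have hw : ∀ θ ∈ Icc (0 : ℝ) 1, ‖θ • w‖ < s := fun θ hθ => by
    rw [norm_smul, Real.norm_of_nonneg hθ.1]
    nlinarith [norm_nonneg w, hθ.2]
  have ha' : a - θ₂ • w ∈ E := hballa <| by
    rw [mem_ball, dist_eq_norm, sub_sub_cancel_left, norm_neg]
    exact (hw θ₂ ⟨hθ₂, by linarith⟩).trans_le (min_le_left _ _)
  have hb' : a - θ₂ • w + s • (Int.cast ∘ d : ι → ℝ) ∈ E := hballb <| by
    rw [mem_ball, dist_eq_norm, show a - θ₂ • w + s • (Int.cast ∘ d : ι → ℝ) - b = (1 - θ₂) • w by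
      simp only [w]; module]
    exact (hw _ ⟨hθ₁, by linarith⟩).trans_le (min_le_right _ _)
  refine h _ ha' d s hs hb' ⟨1 - θ₂, θ₂, hθ₁, hθ₂, hθ, ?_⟩
  simp only [w]
  module

theorem amoeba_compl_component_convex_general {n : ℕ} (f : MvPolynomial (Fin n) ℂ)
    (x : Fin n → ℝ) :
    Convex ℝ (connectedComponentIn (amoeba f)ᶜ x) := by
  refine convex_of_isOpen_of_intDirection_segment_subset
    (isClosed_amoeba f).isOpen_compl.connectedComponentIn fun a ha d s hs hb => ?_
  rw [connectedComponentIn_eq ha] at hb ⊢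
  refine (convex_segment _ _).isPreconnected.subset_connectedComponentIn
    (left_mem_segment ℝ _ _) ?_
  rw [segment_eq_image', add_sub_cancel_left]
  rintro _ ⟨θ, hθ, rfl⟩
  have := add_smul_notMem_amoeba d hs hb (t := θ * s) ⟨by nlinarith [hθ.1], by nlinarith [hθ.2]⟩
  rwa [mul_smul] at this

/-- (Forsberg–Passare–Tsikh) Every connected component of the complement of the
amoeba of a nonzero polynomial is convex. -/
theorem amoeba_compl_component_convex {n : ℕ} (f : MvPolynomial (Fin n) ℂ)
    (hf : f ≠ 0) (x : Fin n → ℝ) (hx : x ∉ amoeba f) :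
    Convex ℝ (connectedComponentIn (amoeba f)ᶜ x) :=
  amoeba_compl_component_convex_general f x
end

section
/- (Kapranov) Let K be an algebraically closed field equipped with a valuation v : K → ℝ≥0 (multiplicative: v(ab) = v(a)v(b), v(a+b) ≤ max(v(a),v(b)), v(a) = 0 iff a = 0) which is surjective onto ℝ≥0. Let S ⊆ ℤⁿ be a finite nonempty set and a_j ∈ K∖{0} for j ∈ S, and let f(z) = ∑_{j∈S} a_j z^j. Then the non-Archimedean amoeba 𝒜_K = {(log v(z₁),…,log v(zₙ)) : z ∈ (K∖{0})ⁿ, f(z) = 0} equals the tropical hypersurface {x ∈ ℝⁿ : the maximum max_{j∈S}(log v(a_j) + ⟨j,x⟩) is attained by at least two distinct j ∈ S}. -/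
open Polynomial

section Valuation
variable {K : Type*} [Field K] {v : K → NNReal}
  (hv_mul : ∀ a b : K, v (a * b) = v a * v b)
  (hv_add : ∀ a b : K, v (a + b) ≤ max (v a) (v b))
  (hv_zero : ∀ a : K, v a = 0 ↔ a = 0)

include hv_mul hv_zero

lemma val_one : v 1 = 1 := by
  have h := hv_mul 1 1
  rw [mul_one] at h
  have h1 : v 1 ≠ 0 := fun h0 => one_ne_zero ((hv_zero 1).mp h0)
  exact (mul_left_cancel₀ h1 (by rw [mul_one]; exact h)).symm

lemma val_neg (x : K) : v (-x) = v x := by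
  have hm : v (-1) * v (-1) = 1 := by
    rw [← hv_mul]; norm_num; exact val_one hv_mul hv_zero
  have h1 : v (-1) = 1 := by
    have := congrArg (fun t : NNReal => (t : ℝ)) hm
    push_cast at this
    have h0 : (0:ℝ) ≤ (v (-1) : ℝ) := (v (-1)).2
    have : (v (-1) : ℝ) = 1 := by nlinarith
    exact NNReal.coe_injective (by rw [this]; norm_num)
  calc v (-x) = v ((-1) * x) := by ring_nf
  _ = v x := by rw [hv_mul, h1, one_mul]

lemma val_pow (x : K) (m : ℕ) : v (x ^ m) = v x ^ m := by
  induction m with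
  | zero => simpa using val_one hv_mul hv_zero
  | succ k ih => rw [pow_succ, hv_mul, ih, pow_succ]

lemma val_zpow {x : K} (hx : x ≠ 0) (m : ℤ) : v (x ^ m) = v x ^ m := by
  cases m with
  | ofNat k => simpa using val_pow hv_mul hv_zero x k
  | negSucc k =>
    rw [zpow_negSucc, zpow_negSucc]
    have hxe : x ^ (k+1) ≠ 0 := pow_ne_zero _ hx
    have : v (x ^ (k+1)) * v ((x ^ (k+1))⁻¹) = 1 := by
      rw [← hv_mul, mul_inv_cancel₀ hxe]; exact val_one hv_mul hv_zero
    rw [val_pow hv_mul hv_zero] at this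
    rw [← val_pow hv_mul hv_zero]
    exact eq_inv_of_mul_eq_one_left (by rw [mul_comm] at this; exact this) |>.trans
      (by rw [val_pow hv_mul hv_zero])

include hv_add

lemma val_sum_le {ι : Type*} (T : Finset ι) (b : ι → K) :
    v (∑ j ∈ T, b j) ≤ T.sup (fun j => v (b j)) := by
  classical
  induction T using Finset.induction with
  | empty => simp [(hv_zero 0).mpr rfl]
  | insert _ _ hx ih =>
    rw [Finset.sum_insert hx, Finset.sup_insert]
    exact le_trans (hv_add _ _) (max_le_max le_rfl ih)

lemma val_add_eq {x y : K} (h : v y < v x) : v (x + y) = v x := by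
  refine le_antisymm (le_trans (hv_add x y) (by simp [le_of_lt h])) ?_
  by_contra hc
  push_neg at hc
  have hxy : x = (x + y) + (-y) := by ring
  have h2 := hv_add (x + y) (-y)
  rw [val_neg hv_mul hv_zero, ← hxy] at h2
  exact absurd (lt_of_le_of_lt h2 (max_lt hc h)) (lt_irrefl _)

lemma exists_two_max {ι : Type*} (T : Finset ι) (b : ι → K) (hT : T.Nonempty)
    (hb : ∀ j ∈ T, b j ≠ 0) (hsum : ∑ j ∈ T, b j = 0) :
    ∃ j ∈ T, ∃ j' ∈ T, j ≠ j' ∧ (∀ k ∈ T, v (b k) ≤ v (b j)) ∧ v (b j') = v (b j) := by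
  classical
  obtain ⟨j, hjT, hjmax⟩ := T.exists_max_image (fun k => v (b k)) hT
  refine ⟨j, hjT, ?_⟩
  by_contra hc
  push_neg at hc
  have hlt : ∀ k ∈ T.erase j, v (b k) < v (b j) := by
    intro k hk
    rcases Finset.mem_erase.mp hk with ⟨hkj, hkT⟩
    refine lt_of_le_of_ne (hjmax k hkT) (fun h => ?_)
    exact hc k hkT (Ne.symm hkj) hjmax h
  have hbj : b j = -∑ k ∈ T.erase j, b k := by
    have := Finset.add_sum_erase T b hjT
    rw [hsum] at this
    linear_combination this
  have h1 : v (b j) ≤ (T.erase j).sup (fun k => v (b k)) := by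
    rw [hbj, val_neg hv_mul hv_zero]
    exact val_sum_le hv_mul hv_add hv_zero _ _
  have h2 : (T.erase j).sup (fun k => v (b k)) < v (b j) := by
    rw [Finset.sup_lt_iff]
    · exact hlt
    · exact pos_iff_ne_zero.mpr (fun h0 => hb j hjT ((hv_zero _).mp h0))
  exact absurd (lt_of_le_of_lt h1 h2) (lt_irrefl _)

omit hv_mul hv_add hv_zero in
lemma coeff_linear_mul (r : K) (p : K[X]) :
    (∀ k : ℕ, ((X - C r) * p).coeff (k+1) = p.coeff k - r * p.coeff (k+1)) ∧
    ((X - C r) * p).coeff 0 = -(r * p.coeff 0) := by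
  constructor
  · intro k
    rw [sub_mul, coeff_sub, coeff_X_mul, coeff_C_mul]
  · rw [sub_mul, coeff_sub, mul_coeff_zero, coeff_X_zero, coeff_C_mul, zero_mul, zero_sub]

lemma newton_core (s : Multiset K) (hs : ∀ r ∈ s, v r ≠ 1) :
    v ((s.map fun r => X - C r).prod.coeff (Multiset.card (s.filter fun r => v r < 1))) =
      ((s.filter fun r => 1 < v r).map v).prod ∧
    ∀ k, k ≠ Multiset.card (s.filter fun r => v r < 1) →
      v ((s.map fun r => X - C r).prod.coeff k) <
        ((s.filter fun r => 1 < v r).map v).prod := by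
  induction s using Multiset.induction_on with
  | empty =>
    simp only [Multiset.filter_zero, Multiset.card_zero, Multiset.map_zero, Multiset.prod_zero]
    constructor
    · simpa using val_one hv_mul hv_zero
    · intro k hk
      rw [coeff_one, if_neg hk, (hv_zero 0).mpr rfl]
      exact one_pos
  | cons r s ih =>
    rename_i _
    have hs' : ∀ x ∈ s, v x ≠ 1 := fun x hx => hs x (Multiset.mem_cons_of_mem hx)
    obtain ⟨ih1, ih2⟩ := ih hs'
    set p := (s.map fun t => X - C t).prod with hp
    set B := Multiset.card (s.filter fun t => v t < 1) with hBdef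
    set N := ((s.filter fun t => 1 < v t).map v).prod with hNdef
    have hcons : ((r ::ₘ s).map fun t => X - C t).prod = (X - C r) * p := by
      rw [Multiset.map_cons, Multiset.prod_cons]
    have hN1 : (1:NNReal) ≤ N := by
      refine Multiset.one_le_prod ?_
      intro x hx
      obtain ⟨t, ht, rfl⟩ := Multiset.mem_map.mp hx
      exact le_of_lt (Multiset.mem_filter.mp ht).2
    have hN0 : (0:NNReal) < N := lt_of_lt_of_le one_pos hN1
    have hle : ∀ k, v (p.coeff k) ≤ N := by
      intro k
      by_cases hkB : k = B
      · rw [hkB, ih1]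
      · exact le_of_lt (ih2 k hkB)
    by_cases hr : 1 < v r
    · have hrpos : (0:NNReal) < v r := lt_trans one_pos hr
      have hNlt : N < v r * N := by
        calc N = 1 * N := (one_mul N).symm
        _ < v r * N := mul_lt_mul_of_pos_right hr hN0
      have hf1 : (r ::ₘ s).filter (fun t => v t < 1) = s.filter (fun t => v t < 1) :=
        Multiset.filter_cons_of_neg _ (not_lt.mpr (le_of_lt hr))
      have hf2 : (r ::ₘ s).filter (fun t => 1 < v t) = r ::ₘ s.filter (fun t => 1 < v t) :=
        Multiset.filter_cons_of_pos _ hr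
      rw [hcons, hf1, hf2, Multiset.map_cons, Multiset.prod_cons, ← hBdef, ← hNdef]
      constructor
      · cases hB : B with
        | zero =>
          rw [(coeff_linear_mul r p).2, val_neg hv_mul hv_zero, hv_mul, ← hB, ih1]
        | succ B' =>
          rw [(coeff_linear_mul r p).1 B']
          have h1 : v (p.coeff B') < N := ih2 B' (by omega)
          have h2 : v (r * p.coeff (B'+1)) = v r * N := by rw [hv_mul, ← hB, ih1]
          have hrw : p.coeff B' - r * p.coeff (B'+1) = (-(r * p.coeff (B'+1))) + p.coeff B' := by
            ring
          rw [hrw, val_add_eq hv_mul hv_add hv_zero (by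
            rw [val_neg hv_mul hv_zero, h2]; exact lt_trans h1 hNlt),
            val_neg hv_mul hv_zero, h2]
      · intro k hk
        cases k with
        | zero =>
          rw [(coeff_linear_mul r p).2, val_neg hv_mul hv_zero, hv_mul]
          exact mul_lt_mul_of_pos_left (ih2 0 (Ne.symm (Ne.symm hk))) hrpos
        | succ k' =>
          rw [(coeff_linear_mul r p).1 k']
          have hsub : v (p.coeff k' - r * p.coeff (k'+1)) ≤
              max (v (p.coeff k')) (v (r * p.coeff (k'+1))) := by
            have h := hv_add (p.coeff k') (-(r * p.coeff (k'+1)))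
            rw [val_neg hv_mul hv_zero] at h
            simpa [sub_eq_add_neg] using h
          refine lt_of_le_of_lt hsub (max_lt ?_ ?_)
          · exact lt_of_le_of_lt (hle k') hNlt
          · rw [hv_mul]
            exact mul_lt_mul_of_pos_left (ih2 (k'+1) hk) hrpos
    · have hrlt : v r < 1 := lt_of_le_of_ne (not_lt.mp hr) (hs r (Multiset.mem_cons_self r s))
      have hf1 : (r ::ₘ s).filter (fun t => v t < 1) = r ::ₘ s.filter (fun t => v t < 1) :=
        Multiset.filter_cons_of_pos _ hrlt
      have hf2 : (r ::ₘ s).filter (fun t => 1 < v t) = s.filter (fun t => 1 < v t) :=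
        Multiset.filter_cons_of_neg _ hr
      have hmul_lt : ∀ k, v (r * p.coeff k) < N := by
        intro k
        rw [hv_mul]
        calc v r * v (p.coeff k) ≤ v r * N := mul_le_mul_right (hle k) _
        _ < 1 * N := mul_lt_mul_of_pos_right hrlt hN0
        _ = N := one_mul N
      rw [hcons, hf1, hf2, Multiset.card_cons, ← hBdef, ← hNdef]
      constructor
      · rw [(coeff_linear_mul r p).1 B]
        have hrw : p.coeff B - r * p.coeff (B+1) = p.coeff B + (-(r * p.coeff (B+1))) := by
          ring
        rw [hrw, val_add_eq hv_mul hv_add hv_zero (by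
          rw [val_neg hv_mul hv_zero, ih1]; exact hmul_lt (B+1)), ih1]
      · intro k hk
        cases k with
        | zero =>
          rw [(coeff_linear_mul r p).2, val_neg hv_mul hv_zero]
          exact hmul_lt 0
        | succ k' =>
          rw [(coeff_linear_mul r p).1 k']
          have hsub : v (p.coeff k' - r * p.coeff (k'+1)) ≤
              max (v (p.coeff k')) (v (r * p.coeff (k'+1))) := by
            have h := hv_add (p.coeff k') (-(r * p.coeff (k'+1)))
            rw [val_neg hv_mul hv_zero] at h
            simpa [sub_eq_add_neg] using h
          refine lt_of_le_of_lt hsub (max_lt ?_ ?_)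
          · exact ih2 k' (by omega)
          · exact hmul_lt (k'+1)

lemma exists_root_val_one [IsAlgClosed K] (p : K[X]) (k₀ k₁ : ℕ) (hne : k₀ ≠ k₁)
    (h0 : p.coeff k₀ ≠ 0)
    (hmax : ∀ k, v (p.coeff k) ≤ v (p.coeff k₀))
    (heq : v (p.coeff k₁) = v (p.coeff k₀)) :
    ∃ w : K, w ≠ 0 ∧ p.eval w = 0 ∧ v w = 1 := by
  by_contra hcon
  push_neg at hcon
  have hp : p ≠ 0 := fun h => h0 (by rw [h, coeff_zero])
  have hroots : ∀ r ∈ p.roots, v r ≠ 1 := by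
    intro r hr
    by_cases hr0 : r = 0
    · rw [hr0, (hv_zero 0).mpr rfl]
      exact zero_ne_one
    · exact hcon r hr0 (Polynomial.isRoot_of_mem_roots hr)
  obtain ⟨hN, hNlt⟩ := newton_core hv_mul hv_add hv_zero p.roots hroots
  have hfac : p = C p.leadingCoeff * (p.roots.map fun a => X - C a).prod :=
    (IsAlgClosed.splits p).eq_prod_roots
  set B := Multiset.card (p.roots.filter fun r => v r < 1) with hB
  set N := ((p.roots.filter fun r => 1 < v r).map v).prod with hNd
  have hlc : v p.leadingCoeff ≠ 0 :=
    fun h => (Polynomial.leadingCoeff_ne_zero.mpr hp) ((hv_zero _).mp h)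
  have hlcpos : 0 < v p.leadingCoeff := pos_iff_ne_zero.mpr hlc
  have hcoeff : ∀ k, v (p.coeff k) = v p.leadingCoeff *
      v ((p.roots.map fun a => X - C a).prod.coeff k) := by
    intro k
    conv_lhs => rw [hfac]
    rw [coeff_C_mul, hv_mul]
  have hkey : ∀ k : ℕ, k ≠ B → v (p.coeff k₀) ≤ v (p.coeff k) → False := by
    intro k hkB hge
    have h1 : v (p.coeff k) < v (p.coeff B) := by
      rw [hcoeff k, hcoeff B, hN]
      exact mul_lt_mul_of_pos_left (hNlt k hkB) hlcpos
    exact absurd (lt_of_lt_of_le h1 (le_trans (hmax B) hge)) (lt_irrefl _)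
  by_cases hk₀B : k₀ = B
  · exact hkey k₁ (fun h => hne (hk₀B.trans h.symm)) heq.ge
  · exact hkey k₀ hk₀B le_rfl

end Valuation

lemma exists_generic_functional {n : ℕ} (D : Finset (Fin n → ℤ)) (hD : ∀ d ∈ D, d ≠ 0) :
    ∃ u : Fin n → ℤ, ∀ d ∈ D, (∑ i, d i * u i) ≠ 0 := by
  classical
  induction D using Finset.induction with
  | empty => exact ⟨0, by simp⟩
  | @insert d D hdD ih =>
    obtain ⟨u, hu⟩ := ih (fun d' hd' => hD d' (Finset.mem_insert_of_mem hd'))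
    have hd : d ≠ 0 := hD d (Finset.mem_insert_self d D)
    set m : (Fin n → ℤ) → ℤ := fun d' => ∑ i, d' i * u i with hm
    set k : (Fin n → ℤ) → ℤ := fun d' => ∑ i, d' i * d i with hk
    have hkd : 0 < k d := by
      obtain ⟨i₀, hi₀⟩ := Function.ne_iff.mp hd
      refine Finset.sum_pos' (fun i _ => mul_self_nonneg (d i)) ⟨i₀, Finset.mem_univ i₀, ?_⟩
      exact mul_self_pos.mpr hi₀
    set g : (Fin n → ℤ) → ℤ := fun d' =>
      if h : ∃ c : ℤ, m d' + c * k d' = 0 then h.choose else 0 with hg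
    obtain ⟨c, hc⟩ := Infinite.exists_notMem_finset ((insert d D).image g)
    refine ⟨fun i => u i + c * d i, ?_⟩
    intro d' hd'
    have hexp : (∑ i, d' i * (u i + c * d i)) = m d' + c * k d' := by
      simp only [hm, hk, Finset.mul_sum, mul_left_comm]
      rw [← Finset.sum_add_distrib]
      congr 1
      ext i
      ring
    rw [hexp]
    intro hzero
    by_cases hkd' : k d' = 0
    · rcases Finset.mem_insert.mp hd' with rfl | hmem
      · omega
      · rw [hkd', mul_zero, add_zero] at hzero
        exact hu d' hmem hzero
    · have hex : ∃ c' : ℤ, m d' + c' * k d' = 0 := ⟨c, hzero⟩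
      have hgd : m d' + (g d') * k d' = 0 := by
        rw [hg]
        simp only [dif_pos hex]
        exact hex.choose_spec
      have : c = g d' := by
        have := hzero.trans hgd.symm
        have h2 : (c - g d') * k d' = 0 := by ring_nf; linarith [this]
        rcases mul_eq_zero.mp h2 with h | h
        · omega
        · exact absurd h hkd'
      exact hc (Finset.mem_image.mpr ⟨d', hd', this.symm⟩)

lemma zpow_finset_sum {K : Type*} [Field K] {w : K} (hw : w ≠ 0) {ι : Type*}
    (s : Finset ι) (c : ι → ℤ) : w ^ (∑ i ∈ s, c i) = ∏ i ∈ s, w ^ (c i) := by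
  classical
  induction s using Finset.induction with
  | empty => simp
  | insert _ _ hx ih => rw [Finset.sum_insert hx, zpow_add₀ hw, Finset.prod_insert hx, ih]

section Main
variable {K : Type*} [Field K] {v : K → NNReal}
  (hv_mul : ∀ a b : K, v (a * b) = v a * v b)
  (hv_zero : ∀ a : K, v a = 0 ↔ a = 0)

include hv_mul hv_zero

lemma val_prod {ι : Type*} (s : Finset ι) (f : ι → K) :
    v (∏ i ∈ s, f i) = ∏ i ∈ s, v (f i) := by
  classical
  induction s using Finset.induction with
  | empty => simpa using val_one hv_mul hv_zero
  | insert _ _ hx ih => rw [Finset.prod_insert hx, hv_mul, ih, Finset.prod_insert hx]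

lemma log_val_term {n : ℕ} (k : Fin n → ℤ) (ak : K) (hak : ak ≠ 0)
    (z : Fin n → K) (hz : ∀ i, z i ≠ 0) :
    Real.log (v (ak * ∏ i, z i ^ (k i)) : ℝ) =
      Real.log (v ak : ℝ) + ∑ i, (k i : ℝ) * Real.log (v (z i) : ℝ) := by
  have hvz : ∀ i, (v (z i) : ℝ) ≠ 0 := by
    intro i
    simpa using fun h => hz i ((hv_zero _).mp (NNReal.coe_injective (by simpa using h)))
  have h1 : v (ak * ∏ i, z i ^ (k i)) = v ak * ∏ i, v (z i) ^ (k i) := by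
    rw [hv_mul, val_prod hv_mul hv_zero]
    congr 1
    exact Finset.prod_congr rfl fun i _ => val_zpow hv_mul hv_zero (hz i) (k i)
  rw [h1]
  push_cast
  rw [Real.log_mul (by simpa using fun h => hak ((hv_zero _).mp (NNReal.coe_injective (by simpa using h))))
    (Finset.prod_ne_zero_iff.mpr fun i _ => zpow_ne_zero _ (hvz i)),
    Real.log_prod (fun i _ => zpow_ne_zero _ (hvz i))]
  congr 1
  exact Finset.sum_congr rfl fun i _ => by rw [Real.log_zpow]

end Main

/-- (Kapranov) Over an algebraically closed field `K` with a surjective multiplicative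
non-Archimedean valuation `v : K → ℝ≥0`, the non-Archimedean amoeba of a Laurent
polynomial `f(z) = ∑_{j∈S} a_j z^j` equals the tropical hypersurface of
`x ↦ max_{j∈S} (log v(a_j) + ⟨j,x⟩)`. -/
theorem kapranov_nonarchimedean_amoeba {n : ℕ} (K : Type*) [Field K] [IsAlgClosed K]
    (v : K → NNReal)
    (hv_mul : ∀ a b : K, v (a * b) = v a * v b)
    (hv_add : ∀ a b : K, v (a + b) ≤ max (v a) (v b))
    (hv_zero : ∀ a : K, v a = 0 ↔ a = 0)
    (hv_surj : Function.Surjective v)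
    (S : Finset (Fin n → ℤ)) (hS : S.Nonempty)
    (a : (Fin n → ℤ) → K) (ha : ∀ j ∈ S, a j ≠ 0) :
    {x : Fin n → ℝ | ∃ z : Fin n → K, (∀ i, z i ≠ 0) ∧
        (∑ j ∈ S, a j * ∏ i, z i ^ (j i)) = 0 ∧
        ∀ i, x i = Real.log (v (z i) : ℝ)} =
      {x : Fin n → ℝ | ∃ j ∈ S, ∃ j' ∈ S, j ≠ j' ∧
        (∀ k ∈ S, Real.log (v (a k) : ℝ) + ∑ i, (k i : ℝ) * x i ≤
          Real.log (v (a j) : ℝ) + ∑ i, (j i : ℝ) * x i) ∧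
        Real.log (v (a j') : ℝ) + ∑ i, (j' i : ℝ) * x i =
          Real.log (v (a j) : ℝ) + ∑ i, (j i : ℝ) * x i} := by
  classical
  have hvne : ∀ b : K, b ≠ 0 → (v b : ℝ) ≠ 0 := by
    intro b hb h
    exact hb ((hv_zero b).mp (NNReal.coe_injective (by simpa using h)))
  have hvpos : ∀ b : K, b ≠ 0 → (0:ℝ) < (v b : ℝ) :=
    fun b hb => lt_of_le_of_ne (v b).2 (Ne.symm (hvne b hb))
  ext x
  simp only [Set.mem_setOf_eq]
  constructor
  · rintro ⟨z, hz, hsum, hx⟩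
    have hbne : ∀ j ∈ S, a j * ∏ i, z i ^ (j i) ≠ 0 := fun j hj =>
      mul_ne_zero (ha j hj) (Finset.prod_ne_zero_iff.mpr fun i _ => zpow_ne_zero _ (hz i))
    obtain ⟨j, hj, j', hj', hne, hmax, heq⟩ :=
      exists_two_max hv_mul hv_add hv_zero S _ hS hbne hsum
    have hL : ∀ k ∈ S, Real.log (v (a k) : ℝ) + ∑ i, (k i : ℝ) * x i =
        Real.log (v (a k * ∏ i, z i ^ (k i)) : ℝ) := by
      intro k hk
      rw [log_val_term hv_mul hv_zero k (a k) (ha k hk) z hz]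
      congr 1
      exact Finset.sum_congr rfl fun i _ => by rw [hx i]
    refine ⟨j, hj, j', hj', hne, ?_, ?_⟩
    · intro k hk
      rw [hL k hk, hL j hj]
      exact Real.log_le_log (hvpos _ (hbne k hk)) (NNReal.coe_le_coe.mpr (hmax k hk))
    · rw [hL j' hj', hL j hj]
      exact congrArg Real.log (congrArg _ heq)
  · rintro ⟨j₀, hj₀, j₁, hj₁, hjne, hmax, heq⟩
    -- generic integer linear functional, injective on S
    obtain ⟨u, hu⟩ := exists_generic_functional
      (((S ×ˢ S).filter fun q => q.1 ≠ q.2).image fun q => q.1 - q.2) (by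
        intro d hd
        obtain ⟨q, hq, rfl⟩ := Finset.mem_image.mp hd
        exact sub_ne_zero.mpr (Finset.mem_filter.mp hq).2)
    set e : (Fin n → ℤ) → ℤ := fun j => ∑ i, j i * u i with he
    have hinj : ∀ j ∈ S, ∀ j' ∈ S, j ≠ j' → e j ≠ e j' := by
      intro j hj j' hj' hne' hee
      refine hu (j - j') (Finset.mem_image.mpr ⟨(j, j'),
        Finset.mem_filter.mpr ⟨Finset.mem_product.mpr ⟨hj, hj'⟩, hne'⟩, rfl⟩) ?_
      have hrw : (∑ i, (j - j') i * u i) = e j - e j' := by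
        simp only [he, Pi.sub_apply, sub_mul, Finset.sum_sub_distrib]
      rw [hrw, hee, sub_self]
    set M := -(S.inf' hS e) with hM
    have hnonneg : ∀ j ∈ S, 0 ≤ e j + M := by
      intro j hj
      have := Finset.inf'_le e hj
      omega
    -- choose t with prescribed valuations
    have hts : ∀ i : Fin n, ∃ t : K, v t = Real.toNNReal (Real.exp (x i)) :=
      fun i => hv_surj _
    choose t ht using hts
    have htpos : ∀ i, (v (t i) : ℝ) = Real.exp (x i) := by
      intro i
      rw [ht i, Real.coe_toNNReal _ (Real.exp_pos _).le]
    have htne : ∀ i, t i ≠ 0 := by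
      intro i h
      have h2 := htpos i
      rw [h, (hv_zero 0).mpr rfl] at h2
      norm_num at h2
      exact (Real.exp_pos (x i)).ne' h2.symm
    have hlogt : ∀ i, Real.log (v (t i) : ℝ) = x i := by
      intro i
      rw [htpos i, Real.log_exp]
    set c : (Fin n → ℤ) → K := fun j => a j * ∏ i, t i ^ (j i) with hc
    have hcne : ∀ j ∈ S, c j ≠ 0 := fun j hj => mul_ne_zero (ha j hj)
      (Finset.prod_ne_zero_iff.mpr fun i _ => zpow_ne_zero _ (htne i))
    have hLc : ∀ k ∈ S, Real.log (v (c k) : ℝ) =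
        Real.log (v (a k) : ℝ) + ∑ i, (k i : ℝ) * x i := by
      intro k hk
      rw [hc]
      rw [log_val_term hv_mul hv_zero k (a k) (ha k hk) t htne]
      congr 1
      exact Finset.sum_congr rfl fun i _ => by rw [hlogt i]
    have hvmaxS : ∀ k ∈ S, v (c k) ≤ v (c j₀) := by
      intro k hk
      have h := hmax k hk
      rw [← hLc k hk, ← hLc j₀ hj₀] at h
      exact NNReal.coe_le_coe.mp
        ((Real.log_le_log_iff (hvpos _ (hcne k hk)) (hvpos _ (hcne j₀ hj₀))).mp h)
    have hveqS : v (c j₁) = v (c j₀) := by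
      have h := heq
      rw [← hLc j₁ hj₁, ← hLc j₀ hj₀] at h
      have h2 := congrArg Real.exp h
      rw [Real.exp_log (hvpos _ (hcne j₁ hj₁)), Real.exp_log (hvpos _ (hcne j₀ hj₀))] at h2
      exact NNReal.coe_injective h2
    -- the univariate polynomial
    set E : (Fin n → ℤ) → ℕ := fun j => (e j + M).toNat with hE
    have hEinj : ∀ j ∈ S, ∀ j' ∈ S, j ≠ j' → E j ≠ E j' := by
      intro j hj j' hj' hne' hEE
      apply hinj j hj j' hj' hne'
      have h3 := congrArg (fun m : ℕ => (m : ℤ)) hEE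
      simp only [hE] at h3
      rw [Int.toNat_of_nonneg (hnonneg j hj), Int.toNat_of_nonneg (hnonneg j' hj')] at h3
      omega
    set p : Polynomial K := ∑ j ∈ S, Polynomial.C (c j) * Polynomial.X ^ (E j) with hp
    have hcoeff : ∀ k : ℕ, p.coeff k = ∑ j ∈ S, if k = E j then c j else 0 := by
      intro k
      rw [hp, Polynomial.finset_sum_coeff]
      exact Finset.sum_congr rfl fun j _ => by
        rw [Polynomial.coeff_C_mul, Polynomial.coeff_X_pow, mul_ite, mul_one, mul_zero]
    have hcoeffE : ∀ j ∈ S, p.coeff (E j) = c j := by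
      intro j hj
      rw [hcoeff]
      rw [Finset.sum_eq_single j
        (fun j' hj' hne' => if_neg fun hh => hEinj j hj j' hj' (Ne.symm hne') hh)
        (fun hji => absurd hj hji)]
      exact if_pos rfl
    have hvmaxall : ∀ k : ℕ, v (p.coeff k) ≤ v (p.coeff (E j₀)) := by
      intro k
      by_cases hk : ∃ j ∈ S, k = E j
      · obtain ⟨j, hj, rfl⟩ := hk
        rw [hcoeffE j hj, hcoeffE j₀ hj₀]
        exact hvmaxS j hj
      · have hzero : p.coeff k = 0 := by
          rw [hcoeff]
          exact Finset.sum_eq_zero fun j hj => if_neg fun hkj => hk ⟨j, hj, hkj⟩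
        rw [hzero, (hv_zero 0).mpr rfl]
        exact zero_le
    have heq' : v (p.coeff (E j₁)) = v (p.coeff (E j₀)) := by
      rw [hcoeffE j₁ hj₁, hcoeffE j₀ hj₀]
      exact hveqS
    have hneE : E j₀ ≠ E j₁ := hEinj j₀ hj₀ j₁ hj₁ hjne
    have h0 : p.coeff (E j₀) ≠ 0 := by
      rw [hcoeffE j₀ hj₀]
      exact hcne j₀ hj₀
    obtain ⟨w, hw0, hweval, hw1⟩ :=
      exists_root_val_one hv_mul hv_add hv_zero p (E j₀) (E j₁) hneE h0 hvmaxall heq'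
    refine ⟨fun i => t i * w ^ (u i), fun i => mul_ne_zero (htne i) (zpow_ne_zero _ hw0),
      ?_, ?_⟩
    · have hterm : ∀ j ∈ S, a j * ∏ i, (t i * w ^ (u i)) ^ (j i) = c j * w ^ (e j) := by
        intro j hj
        have hprod : ∏ i, (t i * w ^ (u i)) ^ (j i) =
            (∏ i, t i ^ (j i)) * w ^ (e j) := by
          calc ∏ i, (t i * w ^ (u i)) ^ (j i)
              = ∏ i, (t i ^ (j i) * w ^ (u i * j i)) := by
                refine Finset.prod_congr rfl fun i _ => ?_
                rw [mul_zpow, ← zpow_mul]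
            _ = (∏ i, t i ^ (j i)) * ∏ i, w ^ (u i * j i) := Finset.prod_mul_distrib
            _ = (∏ i, t i ^ (j i)) * w ^ (∑ i, u i * j i) := by
                rw [zpow_finset_sum hw0]
            _ = (∏ i, t i ^ (j i)) * w ^ (e j) := by
                congr 2
                simp only [he]
                exact Finset.sum_congr rfl fun i _ => mul_comm _ _
        rw [hprod, hc]
        ring
      have h2 : ∀ j ∈ S, c j * w ^ (e j) = w ^ (-M) * (c j * w ^ (E j)) := by
        intro j hj
        have hEj : ((E j : ℕ) : ℤ) = e j + M := Int.toNat_of_nonneg (hnonneg j hj)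
        have hw2 : w ^ (e j) = w ^ (-M) * w ^ ((E j : ℕ) : ℤ) := by
          rw [hEj, ← zpow_add₀ hw0]
          congr 1
          ring
        rw [hw2, zpow_natCast]
        ring
      calc ∑ j ∈ S, a j * ∏ i, (t i * w ^ (u i)) ^ (j i)
          = ∑ j ∈ S, w ^ (-M) * (c j * w ^ (E j)) :=
            Finset.sum_congr rfl fun j hj => (hterm j hj).trans (h2 j hj)
        _ = w ^ (-M) * ∑ j ∈ S, c j * w ^ (E j) := by rw [Finset.mul_sum]
        _ = w ^ (-M) * p.eval w := by
            congr 1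
            rw [hp, Polynomial.eval_finset_sum]
            exact Finset.sum_congr rfl fun j _ => by
              rw [Polynomial.eval_mul, Polynomial.eval_C, Polynomial.eval_pow,
                Polynomial.eval_X]
        _ = 0 := by rw [hweval, mul_zero]
    · intro i
      have hz : v (t i * w ^ (u i)) = v (t i) := by
        rw [hv_mul, val_zpow hv_mul hv_zero hw0, hw1, one_zpow, mul_one]
      rw [hz, hlogt i]
end

section
/- (Mikhalkin) Let f be a polynomial in n complex variables and z ∈ (ℂ*)ⁿ a point with f(z) = 0 such that the vector g = (z₁·∂f/∂z₁(z), …, zₙ·∂f/∂zₙ(z)) is nonzero. Let T_z = {v ∈ ℂⁿ : ∑_k (∂f/∂z_k)(z)·v_k = 0} be the complex tangent space of the hypersurface V_f at z, and let φ : T_z → ℝⁿ be the ℝ-linear map φ(v) = (Re(v₁/z₁),…,Re(vₙ/zₙ)) (the differential of Log restricted to T_z). Then φ fails to be surjective onto ℝⁿ if and only if there exists λ ∈ ℂ∖{0} such that λ·g_k ∈ ℝ for every k = 1,…,n (i.e. the logarithmic Gauss map sends z to a real point of ℂℙⁿ⁻¹). -/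
open MvPolynomial Complex Finset

/-- (Mikhalkin) A nonsingular point `z` of the hypersurface `V_f ⊂ (ℂ*)ⁿ` is a critical
point of `Log|_{V_f}` (i.e. the differential of `Log` restricted to the complex tangent
space fails to be surjective onto `ℝⁿ`) if and only if the logarithmic Gauss map sends
`z` to a real point of `ℂℙⁿ⁻¹`, i.e. there is `λ ≠ 0` with `λ·z_k·∂f/∂z_k(z) ∈ ℝ` for
all `k`. -/
theorem critical_iff_logGauss_real {n : ℕ} (f : MvPolynomial (Fin n) ℂ)
    (z : Fin n → ℂ) (hz : ∀ i, z i ≠ 0) (hfz : MvPolynomial.eval z f = 0)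
    (hg : ∃ k, z k * MvPolynomial.eval z (MvPolynomial.pderiv k f) ≠ 0) :
    (¬ ∀ y : Fin n → ℝ, ∃ v : Fin n → ℂ,
        (∑ k, MvPolynomial.eval z (MvPolynomial.pderiv k f) * v k = 0) ∧
        ∀ k, (v k / z k).re = y k) ↔
      ∃ lam : ℂ, lam ≠ 0 ∧
        ∀ k, (lam * (z k * MvPolynomial.eval z (MvPolynomial.pderiv k f))).im = 0 := by
  set g : Fin n → ℂ := fun k => z k * MvPolynomial.eval z (MvPolynomial.pderiv k f) with hgdef
  obtain ⟨k₀, hk₀⟩ := hg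
  constructor
  · -- not surjective → ∃ lam
    intro hns
    by_contra hlam
    push_neg at hlam
    apply hns
    intro y
    have hp : g k₀ ≠ 0 := hk₀
    obtain ⟨j, hj⟩ := hlam (g k₀)⁻¹ (inv_ne_zero hp)
    set p := g k₀ with hpdef
    set q := g j with hqdef
    set D : ℝ := p.re * q.im - p.im * q.re with hDdef
    have hD : D ≠ 0 := by
      have h1 : (p⁻¹ * q).im = D / Complex.normSq p := by
        rw [Complex.mul_im, Complex.inv_re, Complex.inv_im, hDdef]
        ring
      intro h
      apply hj
      show (p⁻¹ * q).im = 0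
      rw [h1, h, zero_div]
    set c : ℂ := ∑ k, g k * (y k : ℂ) with hcdef
    set T : ℂ := c * Complex.I with hTdef
    set a : ℝ := (T.re * q.im - T.im * q.re) / D with hadef
    set b : ℝ := (p.re * T.im - p.im * T.re) / D with hbdef
    have key : (a : ℂ) * p + (b : ℂ) * q = T := by
      apply Complex.ext
      · simp only [Complex.add_re, Complex.mul_re, Complex.ofReal_re, Complex.ofReal_im,
          hadef, hbdef]
        field_simp
        ring
      · simp only [Complex.add_im, Complex.mul_im, Complex.ofReal_re, Complex.ofReal_im,
          hadef, hbdef]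
        field_simp
        ring
    set s : Fin n → ℂ := fun k =>
      (if k = k₀ then (a : ℂ) else 0) + (if k = j then (b : ℂ) else 0) with hsdef
    refine ⟨fun k => z k * ((y k : ℂ) + s k * Complex.I), ?_, ?_⟩
    · have hterm : ∀ k, MvPolynomial.eval z (MvPolynomial.pderiv k f) *
          (z k * ((y k : ℂ) + s k * Complex.I)) =
          g k * (y k : ℂ) + (g k * s k) * Complex.I := by
        intro k
        rw [hgdef]
        ring
      rw [Finset.sum_congr rfl fun k _ => hterm k, Finset.sum_add_distrib,
        ← Finset.sum_mul, ← hcdef]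
      have hgs : ∑ k, g k * s k = (a : ℂ) * p + (b : ℂ) * q := by
        simp only [hsdef, mul_add, Finset.sum_add_distrib, mul_ite, mul_zero]
        rw [Finset.sum_ite_eq' Finset.univ k₀ fun k => g k * (a : ℂ),
          Finset.sum_ite_eq' Finset.univ j fun k => g k * (b : ℂ)]
        simp [mul_comm, hpdef, hqdef]
      rw [hgs, key, hTdef, mul_assoc, Complex.I_mul_I]
      ring
    · intro k
      rw [mul_div_cancel_left₀ _ (hz k)]
      have : (s k).im = 0 := by
        simp only [hsdef]
        split <;> split <;> simp
      simp [Complex.add_re, Complex.mul_re, Complex.I_re, Complex.I_im, this]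
  · -- ∃ lam → not surjective
    rintro ⟨lam, hlam, hre⟩ hsurj
    set y : Fin n → ℝ := fun k => (lam * g k).re with hydef
    obtain ⟨v, hv1, hv2⟩ := hsurj y
    have h0 : ∑ k, (lam * g k) * (v k / z k) = 0 := by
      have : ∀ k, (lam * g k) * (v k / z k) =
          lam * (MvPolynomial.eval z (MvPolynomial.pderiv k f) * v k) := by
        intro k
        calc (lam * g k) * (v k / z k)
            = lam * (z k * (MvPolynomial.eval z (MvPolynomial.pderiv k f) * v k) / z k) := by
              rw [hgdef]; ring
          _ = lam * (MvPolynomial.eval z (MvPolynomial.pderiv k f) * v k) := by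
              rw [mul_div_cancel_left₀ _ (hz k)]
      rw [Finset.sum_congr rfl fun k _ => this k, ← Finset.mul_sum, hv1, mul_zero]
    have hre0 : ∑ k, y k ^ 2 = 0 := by
      have := congrArg Complex.re h0
      rw [Complex.re_sum] at this
      simp only [Complex.zero_re] at this
      rw [← this]
      refine Finset.sum_congr rfl fun k _ => ?_
      rw [Complex.mul_re, hre k, hv2 k]
      simp [hydef]
      ring
    have hy0 : ∀ k, y k = 0 := by
      intro k
      have := (Finset.sum_eq_zero_iff_of_nonneg
        (fun k _ => sq_nonneg (y k))).mp hre0 k (Finset.mem_univ k)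
      exact pow_eq_zero_iff (by norm_num) |>.mp this
    have : lam * g k₀ = 0 := by
      apply Complex.ext
      · exact hy0 k₀
      · simpa [hgdef] using hre k₀
    exact (mul_ne_zero hlam hk₀) this
end

section
/- (Mikhalkin) Let f be a polynomial in n variables with real coefficients, regarded as a complex polynomial, and let z ∈ (ℝ*)ⁿ ⊆ (ℂ*)ⁿ be a point with all coordinates real and nonzero such that f(z) = 0 and the vector g = (z₁·∂f/∂z₁(z), …, zₙ·∂f/∂zₙ(z)) is nonzero. Then z is a critical point of Log restricted to V_f; that is, the ℝ-linear map φ : T_z → ℝⁿ, φ(v) = (Re(v₁/z₁),…,Re(vₙ/zₙ)), restricted to the complex tangent space T_z = {v ∈ ℂⁿ : ∑_k (∂f/∂z_k)(z)·v_k = 0}, is not surjective onto ℝⁿ. -/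
/-!
At a real point the complex tangent space is cut out by a real linear form `∑ dₖ vₖ = 0`, so
taking real parts shows that every `v ∈ T_z` satisfies `∑ dₖ Re vₖ = 0`, i.e. the image of
`v ↦ (Re (vₖ / zₖ))ₖ` lies in the hyperplane orthogonal to `g = (zₖ dₖ)ₖ`. Since `g ≠ 0`,
the vector `g` itself is not in that hyperplane.
-/

open Finset

lemma MvPolynomial.eval_ofReal_pderiv_map {σ : Type*} (f : MvPolynomial σ ℝ) (z : σ → ℝ)
    (k : σ) :
    eval (fun i => (z i : ℂ)) (pderiv k (map (algebraMap ℝ ℂ) f)) = eval z (pderiv k f) := by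
  rw [pderiv_map]
  exact (map_eval (algebraMap ℝ ℂ) z _).symm

lemma sum_mul_re_div_ofReal_eq_zero {ι : Type*} [Fintype ι] {z d : ι → ℝ}
    (hz : ∀ i, z i ≠ 0) {v : ι → ℂ} (hv : ∑ k, (d k : ℂ) * v k = 0) :
    ∑ k, z k * d k * (v k / (z k : ℂ)).re = 0 := by
  have hre : ∑ k, d k * (v k).re = 0 := by
    simpa only [Complex.re_sum, Complex.re_ofReal_mul, Complex.zero_re] using
      congrArg Complex.re hv
  rw [← hre]
  refine sum_congr rfl fun k _ => ?_
  rw [Complex.div_ofReal_re]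
  field_simp [hz k]

theorem real_point_is_critical_for_Log_general {n : ℕ} (f : MvPolynomial (Fin n) ℝ)
    (z : Fin n → ℝ) (hz : ∀ i, z i ≠ 0)
    (hg : ∃ k, z k * MvPolynomial.eval z (MvPolynomial.pderiv k f) ≠ 0) :
    ¬ ∀ y : Fin n → ℝ, ∃ v : Fin n → ℂ,
        (∑ k, MvPolynomial.eval (fun i => (z i : ℂ))
          (MvPolynomial.pderiv k (MvPolynomial.map (algebraMap ℝ ℂ) f)) * v k = 0) ∧
        ∀ k, (v k / (z k : ℂ)).re = y k := by
  set d : Fin n → ℝ := fun k => MvPolynomial.eval z (MvPolynomial.pderiv k f)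
  intro hsurj
  obtain ⟨v, hv, hvy⟩ := hsurj fun k => z k * d k
  simp only [MvPolynomial.eval_ofReal_pderiv_map] at hv
  have hgg : ∑ k, z k * d k * (z k * d k) = 0 := by
    simpa only [hvy] using sum_mul_re_div_ofReal_eq_zero hz hv
  obtain ⟨k, hk⟩ := hg
  exact hk ((sum_mul_self_eq_zero_iff _ _).mp hgg k (mem_univ k))

/-- (Mikhalkin) A real nonsingular point of a hypersurface defined over `ℝ` is a
critical point of `Log` restricted to the complex hypersurface `V_f`: the differential
of `Log` on the complex tangent space is not surjective onto `ℝⁿ`. -/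
theorem real_point_is_critical_for_Log {n : ℕ} (f : MvPolynomial (Fin n) ℝ)
    (z : Fin n → ℝ) (hz : ∀ i, z i ≠ 0)
    (hfz : MvPolynomial.eval z f = 0)
    (hg : ∃ k, z k * MvPolynomial.eval z (MvPolynomial.pderiv k f) ≠ 0) :
    ¬ ∀ y : Fin n → ℝ, ∃ v : Fin n → ℂ,
        (∑ k, MvPolynomial.eval (fun i => (z i : ℂ))
          (MvPolynomial.pderiv k (MvPolynomial.map (algebraMap ℝ ℂ) f)) * v k = 0) ∧
        ∀ k, (v k / (z k : ℂ)).re = y k :=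
  real_point_is_critical_for_Log_general f z hz hg
end
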